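/- arXiv:cs/0412103 — 5 statements merged into one kernel-verified Lean document; each statement's English description precedes it below -/
import Mathlib

section
/- Let a, b, c, x be 8-bit integers with c > 0 and a equal to the bitwise complement of b (i.e., a = 255 − b). If (a XOR x) − (b XOR x) = c (as integers), then x is uniquely determined: x = a XOR (128 + ⌊c/2⌋); equivalently, x = a XOR (1, c₇, …, c₁)₂ where c = (c₇, …, c₀)₂ is the binary expansion of c. -/
/-!
XOR with the all-ones word `m = 2^(k+1) - 1` is the complement `n ↦ m - n`. Hence with
`y = b XOR x` we get `a XOR x = m - y`, so `c = m - 2y` is odd and `2^k + ⌊c/2⌋ = m - y = y XOR m`.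
XOR-ing with `a = b XOR m` then gives back `b XOR y = x`.
-/

theorem Nat.xor_two_pow_sub_one_of_lt_two_pow {n k : ℕ} (h : n < 2 ^ k) :
    n ^^^ (2 ^ k - 1) = 2 ^ k - 1 - n := by
  have := BitVec.toNat_not (x := BitVec.ofNat k n)
  rwa [← BitVec.xor_allOnes, BitVec.toNat_xor, BitVec.toNat_allOnes, BitVec.toNat_ofNat,
    Nat.mod_eq_of_lt h] at this

theorem eq_xor_of_xor_complement_sub_xor {k b x c : ℕ} (hb : b < 2 ^ (k + 1))
    (hx : x < 2 ^ (k + 1))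
    (h : (((2 ^ (k + 1) - 1 - b) ^^^ x : ℕ) : ℤ) - ((b ^^^ x : ℕ) : ℤ) = c) :
    x = (2 ^ (k + 1) - 1 - b) ^^^ (2 ^ k + c / 2) := by
  set y := b ^^^ x with hy
  have hy_lt : y < 2 ^ (k + 1) := Nat.xor_lt_two_pow hb hx
  have hcompl : 2 ^ (k + 1) - 1 - b = b ^^^ (2 ^ (k + 1) - 1) :=
    (Nat.xor_two_pow_sub_one_of_lt_two_pow hb).symm
  have hxor : (2 ^ (k + 1) - 1 - b) ^^^ x = 2 ^ (k + 1) - 1 - y := by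
    rw [hcompl, Nat.xor_right_comm, ← hy, Nat.xor_two_pow_sub_one_of_lt_two_pow hy_lt]
  have hhalf : 2 ^ k + c / 2 = y ^^^ (2 ^ (k + 1) - 1) := by
    rw [hxor] at h
    rw [Nat.xor_two_pow_sub_one_of_lt_two_pow hy_lt]
    have := pow_succ 2 k
    omega
  rw [hhalf, hcompl, hy]
  simp [Nat.xor_assoc, Nat.xor_comm, Nat.xor_left_comm]

theorem stmt_3_general (a b c x : ℕ) (hb : b < 256) (hx : x < 256)
    (hab : a = 255 - b)
    (h : ((a ^^^ x : ℕ) : ℤ) - ((b ^^^ x : ℕ) : ℤ) = (c : ℤ)) :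
    x = a ^^^ (128 + c / 2) := by
  subst hab
  exact eq_xor_of_xor_complement_sub_xor (k := 7) hb hx h

/-- If `a, b, c, x` are 8-bit integers, `c > 0`, `a` is the bitwise complement of `b`,
and `(a XOR x) - (b XOR x) = c` as integers, then `x = a XOR (128 + ⌊c/2⌋)`. -/
theorem stmt_3 (a b c x : ℕ) (ha : a < 256) (hb : b < 256) (hc : c < 256) (hx : x < 256)
    (hcpos : 0 < c) (hab : a = 255 - b)
    (h : ((a ^^^ x : ℕ) : ℤ) - ((b ^^^ x : ℕ) : ℤ) = (c : ℤ)) :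
    x = a ^^^ (128 + c / 2) :=
  stmt_3_general a b c x hb hx hab h
end

section
/- Let a, b, c, x be 8-bit integers with c > 0, a equal to the bitwise complement of b (i.e., a = 255 − b), and suppose (a XOR x) − (b XOR x) = c (as integers). Then c is odd. -/
theorem Nat.odd_xor_add_xor {a b : ℕ} (x : ℕ) (h : Odd (a + b)) : Odd ((a ^^^ x) + (b ^^^ x)) := by
  rw [Nat.odd_iff] at h ⊢
  have hax : (a ^^^ x) % 2 = (a + x) % 2 := Nat.xor_mod_two_eq
  have hbx : (b ^^^ x) % 2 = (b + x) % 2 := Nat.xor_mod_two_eq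
  omega

theorem stmt_4_general (a b c x : ℕ) (hb : b < 256)
    (hab : a = 255 - b)
    (h : ((a ^^^ x : ℕ) : ℤ) - ((b ^^^ x : ℕ) : ℤ) = (c : ℤ)) :
    Odd c := by
  have hsum : Odd (a + b) := ⟨127, by omega⟩
  have hxor : Odd (((a ^^^ x : ℕ) : ℤ) + ((b ^^^ x : ℕ) : ℤ)) := by
    exact_mod_cast Nat.odd_xor_add_xor x hsum
  rw [← Int.odd_coe_nat, ← h, Int.odd_sub, ← Int.odd_add]
  exact hxor

/-- If `a, b, c, x` are 8-bit integers, `c > 0`, `a` is the bitwise complement of `b`,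
and `(a XOR x) - (b XOR x) = c` as integers, then `c` is odd. -/
theorem stmt_4 (a b c x : ℕ) (ha : a < 256) (hb : b < 256) (hc : c < 256) (hx : x < 256)
    (hcpos : 0 < c) (hab : a = 255 - b)
    (h : ((a ^^^ x : ℕ) : ℤ) - ((b ^^^ x : ℕ) : ℤ) = (c : ℤ)) :
    Odd c :=
  stmt_4_general a b c x hb hab h
end

section
/- Let a, b, c be 8-bit integers with c odd and a equal to the bitwise complement of b (i.e., a = 255 − b). Then x := a XOR (128 + ⌊c/2⌋) is an 8-bit integer satisfying (a XOR x) − (b XOR x) = c (as integers). -/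
/-!
With `t := 2 ^ n + ⌊c / 2⌋` and `x := a ^^^ t` we get `a ^^^ x = t`, while `b ^^^ x` is the
`(n + 1)`-bit complement `2 ^ (n + 1) - 1 - t` of `t`, because `b` is the complement of `a`.
The difference is therefore `2 t - (2 ^ (n + 1) - 1) = 2 ⌊c / 2⌋ + 1 = c`.
-/

namespace Nat

theorem two_pow_sub_one_xor {n x : ℕ} (hx : x < 2 ^ n) : (2 ^ n - 1) ^^^ x = 2 ^ n - 1 - x := by
  refine eq_of_testBit_eq fun i => ?_
  rw [testBit_xor, testBit_two_pow_sub_one, Nat.sub_sub, Nat.add_comm 1,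
    testBit_two_pow_sub_succ hx]
  by_cases hi : i < n
  · simp [hi]
  · have hxi : x < 2 ^ i := hx.trans_le (Nat.pow_le_pow_right two_pos (not_lt.1 hi))
    simp [hi, testBit_lt_two_pow hxi]

theorem xor_two_pow_sub_one_sub {n b : ℕ} (hb : b < 2 ^ n) :
    b ^^^ (2 ^ n - 1 - b) = 2 ^ n - 1 := by
  rw [← two_pow_sub_one_xor hb, Nat.xor_comm, Nat.xor_assoc, Nat.xor_self, Nat.xor_zero]

end Nat

open Nat

theorem complement_xor_sub_xor {n a b t : ℕ} (hb : b < 2 ^ n) (ht : t < 2 ^ n)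
    (hab : a = 2 ^ n - 1 - b) :
    ((a ^^^ (a ^^^ t) : ℕ) : ℤ) - ((b ^^^ (a ^^^ t) : ℕ) : ℤ) = 2 * t - (2 ^ n - 1) := by
  have hcomp : b ^^^ (a ^^^ t) = 2 ^ n - 1 - t := by
    rw [← Nat.xor_assoc, hab, xor_two_pow_sub_one_sub hb, two_pow_sub_one_xor ht]
  rw [xor_xor_cancel_left, hcomp, Nat.cast_sub (by omega), Nat.cast_sub Nat.one_le_two_pow]
  push_cast
  ring

theorem complement_xor_sub_xor_eq_of_odd {n a b c : ℕ} (ha : a < 2 ^ (n + 1))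
    (hb : b < 2 ^ (n + 1)) (hc : c < 2 ^ (n + 1)) (hcodd : Odd c) (hab : a = 2 ^ (n + 1) - 1 - b) :
    a ^^^ (2 ^ n + c / 2) < 2 ^ (n + 1) ∧
      ((a ^^^ (a ^^^ (2 ^ n + c / 2)) : ℕ) : ℤ) -
        ((b ^^^ (a ^^^ (2 ^ n + c / 2)) : ℕ) : ℤ) = (c : ℤ) := by
  have ht : 2 ^ n + c / 2 < 2 ^ (n + 1) := by rw [Nat.pow_succ] at hc ⊢; omega
  refine ⟨xor_lt_two_pow ha ht, ?_⟩
  rw [complement_xor_sub_xor hb ht hab]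
  have hc_mod : c % 2 = 1 := Nat.odd_iff.1 hcodd
  push_cast [Nat.pow_succ]
  omega

/-- For 8-bit integers `a, b, c` with `c` odd and `a` the bitwise complement of `b`,
the value `x := a XOR (128 + ⌊c/2⌋)` is an 8-bit integer satisfying
`(a XOR x) - (b XOR x) = c` as integers. -/
theorem stmt_5 (a b c : ℕ) (ha : a < 256) (hb : b < 256) (hc : c < 256)
    (hcodd : Odd c) (hab : a = 255 - b) :
    a ^^^ (128 + c / 2) < 256 ∧
      ((a ^^^ (a ^^^ (128 + c / 2)) : ℕ) : ℤ) -
        ((b ^^^ (a ^^^ (128 + c / 2)) : ℕ) : ℤ) = (c : ℤ) :=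
  complement_xor_sub_xor_eq_of_odd (n := 7) ha hb hc hcodd hab
end

section
/- Let a, b, c, c', x, x' be 8-bit integers with c > 0, a equal to the bitwise complement of b (i.e., a = 255 − b), (a XOR x) − (b XOR x) = c, and (b XOR x') − (a XOR x') = c'. If c' = 256 − c, then x' = x XOR 128. -/
/-!
With `u = b ^^^ x` and `v = b ^^^ x'`, complementing `b` complements `u` and `v`, so the two
differences are `2 ^ (n + 1) - 1 - 2 u = c ≥ 0` and `2 v - (2 ^ (n + 1) - 1) = c'`. Their sum
`2 ^ (n + 1)` forces `v = u + 2 ^ n` with `u < 2 ^ n`, i.e. `v = u ^^^ 2 ^ n`, and cancelling `b`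
gives `x' = x ^^^ 2 ^ n`.
-/

namespace Nat

theorem xor_two_pow_sub_one_of_lt {a n : ℕ} (h : a < 2 ^ n) :
    a ^^^ (2 ^ n - 1) = 2 ^ n - 1 - a := by
  apply eq_of_testBit_eq
  intro i
  rw [Nat.sub_sub, Nat.add_comm 1, testBit_two_pow_sub_succ h, testBit_xor,
    testBit_two_pow_sub_one]
  by_cases hi : i < n
  · simp [hi]
  · simp [hi, testBit_lt_two_pow (h.trans_le (Nat.pow_le_pow_right two_pos (not_lt.1 hi)))]

theorem xor_two_pow_of_lt {a n : ℕ} (h : a < 2 ^ n) : a ^^^ 2 ^ n = a + 2 ^ n := by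
  rw [← or_two_pow_eq_add_of_lt h]
  apply eq_of_testBit_eq
  intro i
  rcases eq_or_ne n i with rfl | hi
  · simp [testBit_lt_two_pow h]
  · simp [hi]

theorem two_pow_sub_one_sub_xor {b x n : ℕ} (hb : b < 2 ^ n) (hx : x < 2 ^ n) :
    (2 ^ n - 1 - b) ^^^ x = 2 ^ n - 1 - (b ^^^ x) := by
  rw [← xor_two_pow_sub_one_of_lt hb, xor_right_comm,
    xor_two_pow_sub_one_of_lt (xor_lt_two_pow hb hx)]

theorem xor_eq_xor_two_pow_of_sub_eq {n b c c' x x' : ℕ}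
    (hb : b < 2 ^ (n + 1)) (hx : x < 2 ^ (n + 1)) (hx' : x' < 2 ^ (n + 1))
    (h1 : (((2 ^ (n + 1) - 1 - b) ^^^ x : ℕ) : ℤ) - ((b ^^^ x : ℕ) : ℤ) = c)
    (h2 : ((b ^^^ x' : ℕ) : ℤ) - (((2 ^ (n + 1) - 1 - b) ^^^ x' : ℕ) : ℤ) = c')
    (hcc : (c' : ℤ) = 2 ^ (n + 1) - c) :
    x' = x ^^^ 2 ^ n := by
  have hu := xor_lt_two_pow hb hx
  have hv := xor_lt_two_pow hb hx'
  rw [two_pow_sub_one_sub_xor hb hx] at h1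
  rw [two_pow_sub_one_sub_xor hb hx'] at h2
  set u := b ^^^ x
  set v := b ^^^ x'
  have hpow : 2 ^ (n + 1) = 2 * 2 ^ n := Nat.pow_succ'
  rw [show (2 : ℤ) ^ (n + 1) = ((2 ^ (n + 1) : ℕ) : ℤ) by push_cast; rfl] at hcc
  rw [hpow] at hu hv h1 h2 hcc
  have hu_lt : u < 2 ^ n := by omega
  have hv_eq : v = u + 2 ^ n := by omega
  calc x' = b ^^^ v := by simp [v]
    _ = b ^^^ (u ^^^ 2 ^ n) := by rw [hv_eq, xor_two_pow_of_lt hu_lt]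
    _ = x ^^^ 2 ^ n := by simp [u, ← xor_assoc]

end Nat

theorem stmt_6_general (a b c c' x x' : ℕ)
    (hb : b < 256)
    (hx : x < 256) (hx' : x' < 256)
    (hab : a = 255 - b)
    (h1 : ((a ^^^ x : ℕ) : ℤ) - ((b ^^^ x : ℕ) : ℤ) = (c : ℤ))
    (h2 : ((b ^^^ x' : ℕ) : ℤ) - ((a ^^^ x' : ℕ) : ℤ) = (c' : ℤ))
    (hcc : (c' : ℤ) = 256 - (c : ℤ)) :
    x' = x ^^^ 128 := by
  subst hab
  exact Nat.xor_eq_xor_two_pow_of_sub_eq (n := 7) hb hx hx' h1 h2 hcc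

/-- If `a, b, c, c', x, x'` are 8-bit integers with `c > 0`, `a` the bitwise complement
of `b`, `(a XOR x) - (b XOR x) = c`, `(b XOR x') - (a XOR x') = c'`, and `c' = 256 - c`,
then `x' = x XOR 128`. -/
theorem stmt_6 (a b c c' x x' : ℕ)
    (ha : a < 256) (hb : b < 256) (hc : c < 256) (hc' : c' < 256)
    (hx : x < 256) (hx' : x' < 256)
    (hcpos : 0 < c) (hab : a = 255 - b)
    (h1 : ((a ^^^ x : ℕ) : ℤ) - ((b ^^^ x : ℕ) : ℤ) = (c : ℤ))
    (h2 : ((b ^^^ x' : ℕ) : ℤ) - ((a ^^^ x' : ℕ) : ℤ) = (c' : ℤ))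
    (hcc : (c' : ℤ) = 256 - (c : ℤ)) :
    x' = x ^^^ 128 :=
  stmt_6_general a b c c' x x' hb hx hx' hab h1 h2 hcc
end

section
/- Let B₁, B₂ be 8-bit integers with B₁ = B₂ XOR 128, and let x₁, x₂ be real numbers with x₁ − x₂ − 128 an integer multiple of 256. Let f' be a real number such that g₂ := ((256·f' − x₂) mod 256) is a natural number less than 256. Then ((256·f' − x₁) mod 256) = g₂ XOR 128, and consequently ((256·f' − x₁) mod 256) XOR B₁ = g₂ XOR B₂; i.e., the two candidate key pairs (B₁, x₁) and (B₂, x₂) are equivalent for the decryption procedure. -/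
/-!
Since `x₁ ≡ x₂ + 128 (mod 256)` and `256 f' - x₂ ≡ g₂ (mod 256)`, we get
`256 f' - x₁ ≡ g₂ + 128 (mod 256)`, so its reduction is `(g₂ + 128) % 256`. For `g₂ < 256`,
adding `128 = 2⁷` modulo `2⁸` only flips the top bit, i.e. equals `g₂ XOR 128`; the second claim
follows because the two masks `128` cancel in `(g₂ XOR 128) XOR (B₂ XOR 128)`.
-/

theorem Nat.testBit_eq_false_of_lt_two_pow_of_le {g n j : ℕ} (hg : g < 2 ^ n) (hj : n ≤ j) :
    g.testBit j = false :=
  Nat.testBit_lt_two_pow (hg.trans_le (Nat.pow_le_pow_right two_pos hj))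

theorem Nat.xor_two_pow_eq_add_mod {g n : ℕ} (hg : g < 2 ^ (n + 1)) :
    g ^^^ 2 ^ n = (g + 2 ^ n) % 2 ^ (n + 1) := by
  rcases lt_or_ge g (2 ^ n) with hlt | hge
  · rw [Nat.mod_eq_of_lt (by omega), ← Nat.or_two_pow_eq_add_of_lt hlt]
    refine Nat.eq_of_testBit_eq fun j => ?_
    rw [Nat.testBit_xor, Nat.testBit_or, Nat.testBit_two_pow]
    rcases lt_or_ge j n with hj | hj
    · simp [hj.ne']
    · simp [Nat.testBit_eq_false_of_lt_two_pow_of_le hlt hj]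
  · obtain ⟨r, rfl⟩ := Nat.exists_eq_add_of_le hge
    have hr : r < 2 ^ n := by omega
    have hsum : 2 ^ n + r + 2 ^ n = r + 2 ^ (n + 1) := by omega
    rw [hsum, Nat.add_mod_right, Nat.mod_eq_of_lt (by omega), ← mul_one (2 ^ n),
      Nat.two_pow_add_eq_or_of_lt hr, mul_one]
    refine Nat.eq_of_testBit_eq fun j => ?_
    rw [Nat.testBit_xor, Nat.testBit_or, Nat.testBit_two_pow]
    rcases eq_or_ne n j with rfl | hj
    · simp [Nat.testBit_eq_false_of_lt_two_pow_of_le hr le_rfl]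
    · simp [hj]

theorem toIcoMod_natCast {R : Type*} [Ring R] [LinearOrder R] [IsStrictOrderedRing R]
    [Archimedean R] {p : ℕ} (hp : (0 : R) < p) (n : ℕ) :
    toIcoMod hp 0 (n : R) = ((n % p : ℕ) : R) := by
  rw [toIcoMod_eq_iff]
  refine ⟨⟨Nat.cast_nonneg _, ?_⟩, (n / p : ℕ), ?_⟩
  · rw [zero_add, Nat.cast_lt]
    exact Nat.mod_lt _ (by exact_mod_cast hp)
  · rw [natCast_zsmul, nsmul_eq_mul]
    exact_mod_cast (Nat.mod_add_div' n p).symm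

/-- Let `B₁, B₂` be 8-bit integers with `B₁ = B₂ XOR 128`, and `x₁, x₂` reals with
`x₁ - x₂ - 128` an integer multiple of `256`. If `g₂ := ((256·f' - x₂) mod 256)` is a
natural number less than `256`, then `((256·f' - x₁) mod 256) = g₂ XOR 128`, and
consequently `((256·f' - x₁) mod 256) XOR B₁ = g₂ XOR B₂`. -/
theorem stmt_14 (B₁ B₂ : ℕ) (hB : B₁ = B₂ ^^^ 128)
    (x₁ x₂ : ℝ) (hx : ∃ k : ℤ, x₁ - x₂ - 128 = k * 256)
    (f' : ℝ) (g₂ : ℕ) (hg₂lt : g₂ < 256)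
    (hg₂ : (g₂ : ℝ) = toIcoMod (by norm_num : (0:ℝ) < 256) 0 (256 * f' - x₂)) :
    toIcoMod (by norm_num : (0:ℝ) < 256) 0 (256 * f' - x₁) = ((g₂ ^^^ 128 : ℕ) : ℝ) ∧
      ∀ g₁ : ℕ, (g₁ : ℝ) = toIcoMod (by norm_num : (0:ℝ) < 256) 0 (256 * f' - x₁) →
        g₁ ^^^ B₁ = g₂ ^^^ B₂ := by
  obtain ⟨k, hk⟩ := hx
  have hp : (0 : ℝ) < 256 := by norm_num
  have hcongr : toIcoMod hp 0 (256 * f' - x₁) = toIcoMod hp 0 ((g₂ + 128 : ℕ) : ℝ) := by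
    have hdiv := self_sub_toIcoMod_eq_mul hp 0 (256 * f' - x₂)
    refine (toIcoMod_eq_toIcoMod hp).2 ⟨1 + k - toIcoDiv hp 0 (256 * f' - x₂), ?_⟩
    rw [zsmul_eq_mul]
    push_cast
    linarith
  have hxor : g₂ ^^^ 128 = (g₂ + 128) % 256 := Nat.xor_two_pow_eq_add_mod (n := 7) hg₂lt
  have hmain : toIcoMod hp 0 (256 * f' - x₁) = ((g₂ ^^^ 128 : ℕ) : ℝ) := by
    rw [hcongr, hxor]
    simpa using toIcoMod_natCast (R := ℝ) (p := 256) (by norm_num) (g₂ + 128)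
  refine ⟨hmain, fun g₁ hg₁ => ?_⟩
  have hg₁eq : g₁ = g₂ ^^^ 128 := by exact_mod_cast hg₁.trans hmain
  rw [hg₁eq, hB]
  grind
end
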